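/- For bounded linear operators A on H and B on K, w(A ⊗ B) ≥ (1/2)‖A‖‖B‖ + (1/4)| ‖A ⊗ B + i A* ⊗ B*‖ − ‖A ⊗ B − i A* ⊗ B*‖ |. -/

import Mathlib

open ContinuousLinearMap

/-- Numerical radius: `w(T) = sup { |⟨Tx,x⟩| : ‖x‖ = 1 }`. -/
noncomputable def nrad {E : Type*} [NormedAddCommGroup E] [InnerProductSpace ℂ E]
    (T : E →L[ℂ] E) : ℝ :=
  ⨆ x : {x : E // ‖x‖ = 1}, ‖(inner ℂ (T x.1) x.1 : ℂ)‖

/-- `tmul` realizes `E` as the Hilbert tensor product of `H` and `K`: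
the inner product is multiplicative on elementary tensors and elementary
tensors span a dense subspace. -/
structure IsHilbertTensorMap
    {H K E : Type*} [NormedAddCommGroup H] [InnerProductSpace ℂ H]
    [NormedAddCommGroup K] [InnerProductSpace ℂ K]
    [NormedAddCommGroup E] [InnerProductSpace ℂ E]
    (tmul : H →ₗ[ℂ] K →ₗ[ℂ] E) : Prop where
  inner_tmul : ∀ (x z : H) (y w : K),
    (inner ℂ (tmul x y) (tmul z w) : ℂ) = (inner ℂ x z : ℂ) * (inner ℂ y w : ℂ)
  dense_span :
    Dense ((Submodule.span ℂ (Set.range fun p : H × K => tmul p.1 p.2) : Submodule ℂ E) : Set E)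

/-- `T` is the tensor product operator `A ⊗ B`, i.e. `T (x ⊗ y) = A x ⊗ B y`. -/
def IsTensorOp {H K E : Type*} [NormedAddCommGroup H] [InnerProductSpace ℂ H]
    [NormedAddCommGroup K] [InnerProductSpace ℂ K]
    [NormedAddCommGroup E] [InnerProductSpace ℂ E]
    (tmul : H →ₗ[ℂ] K →ₗ[ℂ] E)
    (A : H →L[ℂ] H) (B : K →L[ℂ] K) (T : E →L[ℂ] E) : Prop :=
  ∀ (x : H) (y : K), T (tmul x y) = tmul (A x) (B y)

/-! For a unimodular `μ` with square root `l`, the operator `conj l • (T + μ • T†)` is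
self-adjoint, so its norm is bounded by its numerical radius, which is at most `2 w(T)`. Hence
`‖T ± i T†‖ ≤ 2 w(T)`; combined with `2 ‖T‖ ≤ ‖T + i T†‖ + ‖T - i T†‖` this gives
`w(T) ≥ ‖T‖ / 2 + |‖T + i T†‖ - ‖T - i T†‖| / 4`. Finally `‖A‖ ‖B‖ ≤ ‖A ⊗ B‖` because the norm
is multiplicative on elementary tensors. -/

namespace ContinuousLinearMap

variable {𝕜 E F G H : Type*} [NontriviallyNormedField 𝕜]
  [SeminormedAddCommGroup E] [NormedSpace 𝕜 E] [SeminormedAddCommGroup F] [NormedSpace 𝕜 F]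
  [SeminormedAddCommGroup G] [NormedSpace 𝕜 G] [SeminormedAddCommGroup H] [NormedSpace 𝕜 H]

lemma mul_opNorm_le_of_forall {f : E →L[𝕜] F} {c C : ℝ} (hc : 0 ≤ c) (hC : 0 ≤ C)
    (h : ∀ x, c * ‖f x‖ ≤ C * ‖x‖) : c * ‖f‖ ≤ C := by
  rcases hc.eq_or_lt with rfl | hc
  · simpa using hC
  rw [← le_div_iff₀' hc]
  refine f.opNorm_le_bound (by positivity) fun x => ?_
  rw [div_mul_eq_mul_div, le_div_iff₀' hc]
  exact h x

lemma opNorm_mul_opNorm_le_of_forall (f : E →L[𝕜] F) (g : G →L[𝕜] H) {C : ℝ} (hC : 0 ≤ C)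
    (h : ∀ x y, ‖f x‖ * ‖g y‖ ≤ C * (‖x‖ * ‖y‖)) : ‖f‖ * ‖g‖ ≤ C := by
  have hf : ∀ y, ‖g y‖ * ‖f‖ ≤ C * ‖y‖ := fun y =>
    mul_opNorm_le_of_forall (norm_nonneg _) (by positivity) fun x => by
      linarith [h x y]
  exact mul_opNorm_le_of_forall (norm_nonneg _) hC fun y => by linarith [hf y]

end ContinuousLinearMap

lemma two_mul_norm_le_norm_add_add_norm_sub {E : Type*} [SeminormedAddCommGroup E]
    [NormedSpace ℝ E] (x y : E) : 2 * ‖x‖ ≤ ‖x + y‖ + ‖x - y‖ := by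
  have h : (x + y) + (x - y) = (2 : ℝ) • x := by rw [two_smul]; abel
  simpa [h, norm_smul] using norm_add_le (x + y) (x - y)

section NumericalRadius

variable {E : Type*} [NormedAddCommGroup E] [InnerProductSpace ℂ E]

lemma nrad_nonneg (T : E →L[ℂ] E) : 0 ≤ nrad T :=
  Real.iSup_nonneg fun _ => norm_nonneg _

lemma norm_inner_apply_self_le_nrad (T : E →L[ℂ] E) {x : E} (hx : ‖x‖ = 1) :
    ‖inner ℂ (T x) x‖ ≤ nrad T := by
  refine le_ciSup (f := fun x : {x : E // ‖x‖ = 1} => ‖inner ℂ (T x.1) x.1‖) ⟨‖T‖, ?_⟩ ⟨x, hx⟩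
  rintro _ ⟨⟨y, hy⟩, rfl⟩
  calc ‖inner ℂ (T y) y‖ ≤ ‖T y‖ * ‖y‖ := norm_inner_le_norm _ _
    _ ≤ ‖T‖ * ‖y‖ * ‖y‖ := by gcongr; exact T.le_opNorm y
    _ = ‖T‖ := by rw [hy]; ring

lemma nrad_le_of_forall (T : E →L[ℂ] E) {M : ℝ} (hM : 0 ≤ M)
    (h : ∀ x : E, ‖x‖ = 1 → ‖inner ℂ (T x) x‖ ≤ M) : nrad T ≤ M :=
  Real.iSup_le (fun x => h x.1 x.2) hM

lemma nrad_add_le (S T : E →L[ℂ] E) : nrad (S + T) ≤ nrad S + nrad T :=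
  nrad_le_of_forall _ (add_nonneg (nrad_nonneg S) (nrad_nonneg T)) fun x hx => by
    rw [add_apply, inner_add_left]
    exact (norm_add_le _ _).trans
      (add_le_add (norm_inner_apply_self_le_nrad S hx) (norm_inner_apply_self_le_nrad T hx))

lemma nrad_smul (c : ℂ) (T : E →L[ℂ] E) : nrad (c • T) = ‖c‖ * nrad T := by
  simp only [nrad, smul_apply, inner_smul_left, norm_mul, RCLike.norm_conj]
  exact (Real.mul_iSup_of_nonneg (norm_nonneg c) _).symm

lemma nrad_adjoint [CompleteSpace E] (T : E →L[ℂ] E) : nrad (adjoint T) = nrad T := by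
  simp only [nrad, adjoint_inner_left, norm_inner_symm]

lemma abs_rayleighQuotient_le_nrad (T : E →L[ℂ] E) (x : E) : |T.rayleighQuotient x| ≤ nrad T := by
  rcases eq_or_ne x 0 with rfl | hx
  · simpa using nrad_nonneg T
  have hx' : (‖x‖ : ℂ) ≠ 0 := by exact_mod_cast norm_ne_zero_iff.mpr hx
  have hu : ‖(‖x‖ : ℂ)⁻¹ • x‖ = 1 := by
    simp [norm_smul, norm_ne_zero_iff.mpr hx]
  rw [← T.rayleigh_smul x (inv_ne_zero hx'), rayleighQuotient, hu, one_pow, div_one,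
    reApplyInnerSelf_apply]
  exact (RCLike.abs_re_le_norm _).trans (norm_inner_apply_self_le_nrad T hu)

lemma IsSelfAdjoint.norm_le_nrad [CompleteSpace E] {T : E →L[ℂ] E} (hT : IsSelfAdjoint T) :
    ‖T‖ ≤ nrad T := by
  rw [T.norm_eq_iSup_rayleighQuotient hT.isSymmetric]
  exact ciSup_le (abs_rayleighQuotient_le_nrad T)

lemma norm_add_smul_adjoint_le_two_mul_nrad [CompleteSpace E] (T : E →L[ℂ] E) {μ : ℂ}
    (hμ : ‖μ‖ = 1) : ‖T + μ • adjoint T‖ ≤ 2 * nrad T := by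
  obtain ⟨l, hl⟩ := IsAlgClosed.exists_pow_nat_eq μ two_pos
  have hl₁ : ‖l‖ = 1 := by
    rwa [← hl, norm_pow, pow_eq_one_iff_of_nonneg (norm_nonneg l) two_ne_zero] at hμ
  have hR : star l • (T + μ • adjoint T) = star l • T + star (star l • T) := by
    rw [star_smul, star_star, star_eq_adjoint, smul_add, smul_smul, ← hl, sq, ← mul_assoc,
      RCLike.star_def, RCLike.conj_mul, hl₁]
    simp
  calc ‖T + μ • adjoint T‖ = ‖star l • (T + μ • adjoint T)‖ := by
        rw [norm_smul, norm_star, hl₁, one_mul]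
    _ ≤ nrad (star l • T + star (star l • T)) := by
        rw [hR]; exact (IsSelfAdjoint.add_star_self _).norm_le_nrad
    _ ≤ nrad (star l • T) + nrad (star (star l • T)) := nrad_add_le _ _
    _ = 2 * nrad T := by
        rw [star_eq_adjoint, nrad_adjoint, nrad_smul, norm_star, hl₁]; ring

lemma norm_div_two_add_le_nrad [CompleteSpace E] (T : E →L[ℂ] E) :
    ‖T‖ / 2 + |‖T + Complex.I • adjoint T‖ - ‖T - Complex.I • adjoint T‖| / 4 ≤ nrad T := by
  have hadd := norm_add_smul_adjoint_le_two_mul_nrad T (μ := Complex.I) (by simp)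
  have hsub := norm_add_smul_adjoint_le_two_mul_nrad T (μ := -Complex.I) (by simp)
  rw [neg_smul, ← sub_eq_add_neg] at hsub
  have htwo := two_mul_norm_le_norm_add_add_norm_sub T (Complex.I • adjoint T)
  rw [abs_sub_comm]
  cases abs_cases (‖T - Complex.I • adjoint T‖ - ‖T + Complex.I • adjoint T‖) <;> linarith

end NumericalRadius

section TensorProduct

variable {H K E : Type*} [NormedAddCommGroup H] [InnerProductSpace ℂ H]
  [NormedAddCommGroup K] [InnerProductSpace ℂ K] [NormedAddCommGroup E] [InnerProductSpace ℂ E]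
  {tmul : H →ₗ[ℂ] K →ₗ[ℂ] E}

lemma IsHilbertTensorMap.norm_tmul (htmul : IsHilbertTensorMap tmul) (x : H) (y : K) :
    ‖tmul x y‖ = ‖x‖ * ‖y‖ := by
  have h : ‖tmul x y‖ ^ 2 = (‖x‖ * ‖y‖) ^ 2 := by
    have h := htmul.inner_tmul x x y y
    simp only [inner_self_eq_norm_sq_to_K] at h
    rw [mul_pow]
    exact_mod_cast h
  exact (pow_left_inj₀ (norm_nonneg _) (by positivity) two_ne_zero).mp h

lemma IsTensorOp.opNorm_mul_opNorm_le (hnorm : ∀ x y, ‖tmul x y‖ = ‖x‖ * ‖y‖)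
    {A : H →L[ℂ] H} {B : K →L[ℂ] K} {T : E →L[ℂ] E} (hT : IsTensorOp tmul A B T) :
    ‖A‖ * ‖B‖ ≤ ‖T‖ :=
  opNorm_mul_opNorm_le_of_forall A B (norm_nonneg T) fun x y => by
    simpa only [hT x y, hnorm] using T.le_opNorm (tmul x y)

end TensorProduct

theorem stmt11_general
    {H K E : Type*} [NormedAddCommGroup H] [InnerProductSpace ℂ H]
    [NormedAddCommGroup K] [InnerProductSpace ℂ K]
    [NormedAddCommGroup E] [InnerProductSpace ℂ E] [CompleteSpace E]
    (tmul : H →ₗ[ℂ] K →ₗ[ℂ] E) (htmul : IsHilbertTensorMap tmul)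
    (A : H →L[ℂ] H) (B : K →L[ℂ] K) (T : E →L[ℂ] E)
    (hT : IsTensorOp tmul A B T) :
    (1 / 2) * (‖A‖ * ‖B‖) +
      (1 / 4) * |‖T + Complex.I • ContinuousLinearMap.adjoint T‖ -
        ‖T - Complex.I • ContinuousLinearMap.adjoint T‖| ≤ nrad T := by
  have hAB := hT.opNorm_mul_opNorm_le htmul.norm_tmul
  have hw := norm_div_two_add_le_nrad T
  linarith

theorem stmt11
    {H K E : Type*} [NormedAddCommGroup H] [InnerProductSpace ℂ H] [CompleteSpace H]
    [NormedAddCommGroup K] [InnerProductSpace ℂ K] [CompleteSpace K]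
    [NormedAddCommGroup E] [InnerProductSpace ℂ E] [CompleteSpace E]
    (tmul : H →ₗ[ℂ] K →ₗ[ℂ] E) (htmul : IsHilbertTensorMap tmul)
    (A : H →L[ℂ] H) (B : K →L[ℂ] K) (T : E →L[ℂ] E)
    (hT : IsTensorOp tmul A B T) :
    (1 / 2) * (‖A‖ * ‖B‖) +
      (1 / 4) * |‖T + Complex.I • ContinuousLinearMap.adjoint T‖ -
        ‖T - Complex.I • ContinuousLinearMap.adjoint T‖| ≤ nrad T :=
  stmt11_general tmul htmul A B T hT
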